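/- arXiv:2501.18677 — 4 statements merged into one kernel-verified Lean document; each statement's English description precedes it below -/
import Mathlib

section
/- Let G be a finite connected simple graph on n vertices and let W be a walk in G whose vertex sequence contains every vertex of G. List the vertices of G as v_1, …, v_n in order of their first occurrence in the vertex sequence of W. Then ∑_{j=1}^{n−1} dist(v_j, v_{j+1}) ≤ length(W). -/
/-- The list of elements of `l` in order of their first occurrence in `l`. -/
def firstOccurrences {V : Type*} [DecidableEq V] (l : List V) : List V :=
  (l.reverse.dedup).reverse

section Aux

variable {V : Type*} [DecidableEq V]

lemma dedup_append_singleton (a : V) : ∀ xs : List V,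
    (xs ++ [a]).dedup = (xs.dedup).erase a ++ [a]
  | [] => by simp
  | x :: xs' => by
    by_cases hxa : x = a
    · subst hxa
      rw [List.cons_append, List.dedup_cons_of_mem (by simp), dedup_append_singleton x xs']
      by_cases hx : x ∈ xs'
      · rw [List.dedup_cons_of_mem hx]
      · rw [List.dedup_cons_of_notMem hx, List.erase_cons_head,
          List.erase_of_not_mem (by simpa using hx)]
    · by_cases hx : x ∈ xs'
      · rw [List.cons_append, List.dedup_cons_of_mem (by simp [hx]),
          List.dedup_cons_of_mem hx, dedup_append_singleton a xs']
      · rw [List.cons_append, List.dedup_cons_of_notMem (by simp [hx, hxa]),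
          List.dedup_cons_of_notMem hx, dedup_append_singleton a xs',
          List.erase_cons_tail (by simp [hxa]), List.cons_append]

lemma reverse_erase_of_nodup (a : V) {m : List V} (hm : m.Nodup) :
    (m.erase a).reverse = m.reverse.erase a := by
  rw [List.Nodup.erase_eq_filter hm, List.Nodup.erase_eq_filter (by simpa using hm),
    ← List.filter_reverse]

lemma firstOccurrences_cons (a : V) (t : List V) :
    firstOccurrences (a :: t) = a :: (firstOccurrences t).erase a := by
  unfold firstOccurrences
  rw [List.reverse_cons, dedup_append_singleton, List.reverse_append,
    List.reverse_singleton, reverse_erase_of_nodup a (List.nodup_dedup _)]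
  rfl

variable (G : SimpleGraph V)

/-- sum of consecutive distances -/
noncomputable def sumD (l : List V) : ℕ := (List.zipWith (fun a b => G.dist a b) l l.tail).sum

lemma sumD_cons (a b : V) (t : List V) :
    sumD G (a :: b :: t) = G.dist a b + sumD G (b :: t) := rfl

lemma sumD_cons_erase (hG : G.Connected) (a : V) :
    ∀ (t : List V) (b : V), sumD G (b :: t.erase a) ≤ sumD G (b :: t)
  | [], b => le_refl _
  | c :: t', b => by
    by_cases hac : a = c
    · subst hac
      rw [List.erase_cons_head]
      cases t' with
      | nil => simp [sumD]
      | cons d t'' =>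
        rw [sumD_cons, sumD_cons, sumD_cons, ← add_assoc]
        exact Nat.add_le_add_right (hG.dist_triangle) _
    · rw [List.erase_cons_tail (by simp [Ne.symm hac]), sumD_cons, sumD_cons]
      exact Nat.add_le_add_left (sumD_cons_erase hG a t' c) _

lemma sumD_key (hG : G.Connected) (a b : V) (t : List V) :
    sumD G (a :: (b :: t).erase a) ≤ G.dist a b + sumD G (b :: t) := by
  by_cases hab : a = b
  · subst hab
    rw [List.erase_cons_head, SimpleGraph.dist_self]
    cases t with
    | nil => simp [sumD]
    | cons c t' => simpa [sumD_cons] using le_refl _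
  · rw [List.erase_cons_tail (by simp [Ne.symm hab]), sumD_cons]
    exact Nat.add_le_add_left (sumD_cons_erase G hG a t b) _

lemma main_lemma (hG : G.Connected) {u v : V} (p : G.Walk u v) :
    sumD G (firstOccurrences p.support) ≤ p.length := by
  induction p with
  | nil => simp [firstOccurrences, sumD]
  | @cons u b v h p ih =>
    rw [SimpleGraph.Walk.support_cons, firstOccurrences_cons,
      SimpleGraph.Walk.length_cons]
    have hfo : firstOccurrences p.support
        = b :: ((firstOccurrences p.support.tail).erase b) := by
      conv_lhs => rw [p.support_eq_cons]
      rw [firstOccurrences_cons]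
    rw [hfo]
    calc sumD G (u :: (b :: (firstOccurrences p.support.tail).erase b).erase u)
        ≤ G.dist u b + sumD G (b :: (firstOccurrences p.support.tail).erase b) :=
          sumD_key G hG _ _ _
      _ ≤ 1 + p.length :=
          Nat.add_le_add (by simpa using G.dist_le h.toWalk) (hfo ▸ ih)
      _ = p.length + 1 := Nat.add_comm _ _

end Aux

/-- Let `W` be a walk visiting all vertices of a finite connected simple graph `G`, and let
`v_1, …, v_n` be the vertices of `G` listed in order of their first occurrence in the vertex
sequence of `W`. Then `∑_{j=1}^{n-1} dist(v_j, v_{j+1}) ≤ length W`. -/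
theorem sum_dist_firstOccurrences_le_walk_length {V : Type*} [Fintype V] [DecidableEq V]
    (G : SimpleGraph V) (hG : G.Connected) (u v : V) (W : G.Walk u v)
    (hall : ∀ x : V, x ∈ W.support) :
    (List.zipWith (fun a b => G.dist a b) (firstOccurrences W.support)
        (firstOccurrences W.support).tail).sum ≤ W.length := by
  exact main_lemma G hG W
end

section
/- Let G be a finite connected simple graph on n ≥ 1 vertices. Then the minimum, over all walks in G that visit all vertices, of the length of the walk equals the minimum, over all bijections σ : {1,…,n} → V, of ∑_{j=1}^{n−1} dist(σ(j), σ(j+1)). (In other words, the shortest non-simple path visiting all vertices of G is obtained from a travelling-salesman path of the complete weighted 'supergraph' on V whose edge weights are the graph distances of G.) -/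
/-!
A walk visiting all vertices lists them in order of (some) occurrence; the distance between
consecutive vertices of this list is at most the length of the piece of walk between them, so the
resulting TSP-path value telescopes to at most the length of the walk. Conversely, concatenating
shortest paths between consecutive vertices of a TSP path gives an all-visiting walk whose length
is exactly its value.
-/

open Finset

namespace SimpleGraph

variable {V : Type*} {G : SimpleGraph V}

namespace Walk

theorem dist_getVert_le {u v : V} (w : G.Walk u v) {i j : ℕ} (hij : i ≤ j) :
    G.dist (w.getVert i) (w.getVert j) ≤ j - i := by
  obtain ⟨k, rfl⟩ := Nat.exists_eq_add_of_le hij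
  have h := dist_le ((w.drop i).take k)
  rw [take_length, drop_getVert] at h
  omega

theorem add_sum_dist_getVert_le {u v : V} (w : G.Walk u v) (a : ℕ → ℕ) (m : ℕ)
    (ha : ∀ j < m, a j ≤ a (j + 1)) :
    a 0 + ∑ j ∈ range m, G.dist (w.getVert (a j)) (w.getVert (a (j + 1))) ≤ a m := by
  induction m with
  | zero => simp
  | succ m ih =>
    have hmono := ha m m.lt_add_one
    have hstep := w.dist_getVert_le hmono
    have hprev := ih fun j hj => ha j (by omega)
    rw [sum_range_succ]
    omega

theorem exists_strictMonoOn_bijOn_getVert_comp [Fintype V] {u v : V} (w : G.Walk u v)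
    (hw : ∀ x, x ∈ w.support) :
    ∃ a : ℕ → ℕ, Set.BijOn (w.getVert ∘ a) (Set.Iio (Fintype.card V)) Set.univ ∧
      StrictMonoOn a (Set.Iio (Fintype.card V)) ∧ ∀ j < Fintype.card V, a j ≤ w.length := by
  classical
  choose g hg using fun x => mem_support_iff_exists_getVert.mp (hw x)
  have hg_inj : Function.Injective g := fun x y hxy => (hg x).1.symm.trans (hxy ▸ (hg y).1)
  set T := univ.image g
  have hT : (Set.ofPred (· ∈ T)).Finite := T.finite_toSet
  have hcard : #hT.toFinset = Fintype.card V := by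
    rw [finite_toSet_toFinset, card_image_of_injective _ hg_inj, card_univ]
  have hnth : Set.BijOn (Nat.nth (· ∈ T)) (Set.Iio (Fintype.card V)) T := by
    have h := (Nat.nth_injOn hT).bijOn_image
    rwa [Nat.image_nth_Iio_card, hcard] at h
  have hgetVert : Set.BijOn w.getVert T Set.univ := by
    refine Set.InvOn.bijOn ⟨?_, fun x _ => (hg x).1⟩ (Set.mapsTo_univ _ _)
      fun x _ => mem_image_of_mem g (mem_univ x)
    rintro _ ht
    obtain ⟨x, -, rfl⟩ := mem_image.mp ht
    rw [(hg x).1]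
  refine ⟨Nat.nth (· ∈ T), hgetVert.comp hnth, hcard ▸ Nat.nth_strictMonoOn hT, fun j hj => ?_⟩
  obtain ⟨x, -, hx⟩ := mem_image.mp (hnth.mapsTo hj)
  exact hx ▸ (hg x).2

theorem exists_bijOn_sum_dist_le_length [Fintype V] {u v : V} (w : G.Walk u v)
    (hw : ∀ x, x ∈ w.support) :
    ∃ σ : ℕ → V, Set.BijOn σ (Set.Iio (Fintype.card V)) Set.univ ∧
      ∑ j ∈ range (Fintype.card V - 1), G.dist (σ j) (σ (j + 1)) ≤ w.length := by
  obtain ⟨a, hbij, hmono, hle⟩ := w.exists_strictMonoOn_bijOn_getVert_comp hw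
  have hn : 0 < Fintype.card V := Fintype.card_pos_iff.mpr ⟨u⟩
  have hsum := w.add_sum_dist_getVert_le a (Fintype.card V - 1) fun j hj =>
    hmono.monotoneOn (Set.mem_Iio.mpr (by omega)) (Set.mem_Iio.mpr (by omega)) j.le_succ
  have hlast := hle (Fintype.card V - 1) (by omega)
  exact ⟨w.getVert ∘ a, hbij, by simp only [Function.comp_apply]; omega⟩

end Walk

theorem Connected.exists_walk_length_eq_sum_dist (hG : G.Connected) (σ : ℕ → V) (m : ℕ) :
    ∃ w : G.Walk (σ 0) (σ m), (∀ j ≤ m, σ j ∈ w.support) ∧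
      w.length = ∑ j ∈ range m, G.dist (σ j) (σ (j + 1)) := by
  induction m with
  | zero => exact ⟨.nil, by simp, by simp⟩
  | succ m ih =>
    obtain ⟨w, hw, hlen⟩ := ih
    obtain ⟨p, hp⟩ := hG.exists_walk_length_eq_dist (σ m) (σ (m + 1))
    refine ⟨w.append p, fun j hj => ?_, by rw [Walk.length_append, hlen, hp, sum_range_succ]⟩
    rw [Walk.mem_support_append_iff]
    rcases Nat.lt_or_eq_of_le hj with hj | rfl
    · exact .inl (hw j (by omega))
    · exact .inr p.end_mem_support

end SimpleGraph

theorem min_allVisiting_walk_eq_min_TSP_path_general {V : Type*} [Fintype V] (G : SimpleGraph V)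
    (hG : G.Connected) (n : ℕ) (hn : n = Fintype.card V) :
    sInf {k : ℕ | ∃ (u v : V) (w : G.Walk u v), (∀ x : V, x ∈ w.support) ∧ w.length = k} =
    sInf {k : ℕ | ∃ σ : ℕ → V, Set.BijOn σ (Set.Iio n) Set.univ ∧
        k = ∑ j ∈ Finset.range (n - 1), G.dist (σ j) (σ (j + 1))} := by
  subst hn
  apply csInf_eq_csInf_of_forall_exists_le
  · rintro _ ⟨u, v, w, hw, rfl⟩
    obtain ⟨σ, hσ, hle⟩ := w.exists_bijOn_sum_dist_le_length hw
    exact ⟨_, ⟨σ, hσ, rfl⟩, hle⟩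
  · rintro _ ⟨σ, hσ, rfl⟩
    obtain ⟨w, hw, hlen⟩ := hG.exists_walk_length_eq_sum_dist σ (Fintype.card V - 1)
    refine ⟨_, ⟨_, _, w, fun x => ?_, hlen⟩, le_rfl⟩
    obtain ⟨j, hj, rfl⟩ := hσ.surjOn (Set.mem_univ x)
    exact hw j (by rw [Set.mem_Iio] at hj; omega)

/-- In a finite connected simple graph `G` on `n ≥ 1` vertices, the minimum length of a walk
visiting all vertices equals the minimum over all bijections `σ : {0,…,n-1} → V` of
`∑_{j<n-1} dist(σ j, σ (j+1))` (the TSP-path value of the distance "supergraph"). -/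
theorem min_allVisiting_walk_eq_min_TSP_path {V : Type*} [Fintype V] (G : SimpleGraph V)
    (hG : G.Connected) (n : ℕ) (hn : n = Fintype.card V) (h1 : 1 ≤ n) :
    sInf {k : ℕ | ∃ (u v : V) (w : G.Walk u v), (∀ x : V, x ∈ w.support) ∧ w.length = k} =
    sInf {k : ℕ | ∃ σ : ℕ → V, Set.BijOn σ (Set.Iio n) Set.univ ∧
        k = ∑ j ∈ Finset.range (n - 1), G.dist (σ j) (σ (j + 1))} :=
  min_allVisiting_walk_eq_min_TSP_path_general G hG n hn
end

section
/- Let G be a finite connected simple graph and let P be a walk of minimum length among all walks in G that visit all vertices, with vertex sequence (w_1, …, w_k). If for some index j with 1 ≤ j ≤ k−2 we have w_j = w_{j+2}, then the vertex w_{j+1} does not occur among w_1, …, w_j (i.e., position j+1 is the first occurrence of w_{j+1} in the walk). -/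
lemma backtrack_delete {V : Type*} {G : SimpleGraph V} :
    ∀ (j : ℕ) {u v : V} (P : G.Walk u v) (hj : j + 2 < P.support.length),
      P.support.get ⟨j, by omega⟩ = P.support.get ⟨j + 2, hj⟩ →
      ∃ Q : G.Walk u v, Q.length + 2 = P.length ∧
        (∀ x ∈ P.support.take (j + 1), x ∈ Q.support) ∧
        (∀ x ∈ P.support.drop (j + 2), x ∈ Q.support) := by
  intro j
  induction j with
  | zero =>
    intro u v P hj heq
    cases P with
    | nil => simp at hj
    | cons h P₁ =>
      cases P₁ with
      | nil => simp at hj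
      | @cons b c _ h' P₂ =>
        have hc : u = c := by
          have h0 : P₂.support[0] = c := by
            have := P₂.head_support
            rwa [List.head_eq_getElem] at this
          simpa [h0] using heq
        refine ⟨P₂.copy hc.symm rfl, by simp, ?_, ?_⟩
        · intro x hx
          simp only [SimpleGraph.Walk.support_cons, List.take_succ_cons,
            List.take_zero, List.mem_singleton] at hx
          subst hx
          simp [hc]
        · intro x hx
          simp only [SimpleGraph.Walk.support_cons, List.drop_succ_cons,
            List.drop_zero] at hx
          simpa using hx
  | succ j ih =>
    intro u v P hj heq
    cases P with
    | nil => simp at hj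
    | cons h P₁ =>
      have hj' : j + 2 < P₁.support.length := by
        simpa [Nat.succ_lt_succ_iff] using hj
      have heq' : P₁.support.get ⟨j, by omega⟩ = P₁.support.get ⟨j + 2, hj'⟩ := by
        simpa using heq
      obtain ⟨Q₁, hQlen, h1, h2⟩ := ih P₁ hj' heq'
      refine ⟨SimpleGraph.Walk.cons h Q₁, by simpa using hQlen, ?_, ?_⟩
      · intro x hx
        simp only [SimpleGraph.Walk.support_cons, List.take_succ_cons,
          List.mem_cons] at hx ⊢
        rcases hx with rfl | hx
        · exact Or.inl rfl
        · exact Or.inr (h1 x hx)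
      · intro x hx
        simp only [SimpleGraph.Walk.support_cons, List.drop_succ_cons,
          List.mem_cons] at hx ⊢
        exact Or.inr (h2 x hx)


/-- Let `P` be a walk of minimum length among walks of a finite connected simple graph `G` that
visit all vertices, with vertex sequence `w_0, …, w_{k-1}` (0-indexed). If `w_j = w_{j+2}` for
some `j` with `j + 2 < k`, then `w_{j+1}` does not occur among `w_0, …, w_j`; that is, position
`j+1` is the first occurrence of `w_{j+1}` in the walk. -/
theorem shortest_allVisiting_walk_backtrack_first_occurrence {V : Type*} [Fintype V]
    (G : SimpleGraph V) (hG : G.Connected) (u v : V) (P : G.Walk u v)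
    (hall : ∀ x : V, x ∈ P.support)
    (hmin : ∀ (u' v' : V) (Q : G.Walk u' v'), (∀ x : V, x ∈ Q.support) →
      P.length ≤ Q.length)
    (j : ℕ) (hj : j + 2 < P.support.length)
    (heq : P.support.get ⟨j, by omega⟩ = P.support.get ⟨j + 2, hj⟩) :
    P.support.get ⟨j + 1, by omega⟩ ∉ P.support.take (j + 1) := by
  intro hmem
  obtain ⟨Q, hQlen, h1, h2⟩ := backtrack_delete j P hj heq
  have hlen : P.support.length = P.length + 1 := P.length_support
  have hallQ : ∀ x : V, x ∈ Q.support := by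
    intro x
    obtain ⟨⟨i, hi⟩, rfl⟩ := List.mem_iff_get.mp (hall x)
    rcases lt_trichotomy i (j + 1) with hlt | heqi | hgt
    · refine h1 _ ?_
      rw [List.get_eq_getElem]
      have : P.support[i] = (P.support.take (j + 1))[i]'(by
        simp [List.length_take]; omega) := by
        rw [List.getElem_take]
      rw [this]
      exact List.getElem_mem _
    · subst heqi
      exact h1 _ hmem
    · refine h2 _ ?_
      have hi' : i - (j + 2) < (P.support.drop (j + 2)).length := by
        simp only [List.length_drop]; omega
      have : P.support[i] = (P.support.drop (j + 2))[i - (j + 2)]'hi' := by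
        rw [List.getElem_drop]
        congr 1
        omega
      rw [List.get_eq_getElem, this]
      exact List.getElem_mem _
  have := hmin u v Q hallQ
  omega
end

section
/- Let m ≥ 2 be an integer, let ε be a real number with 0 < ε < 1, and set t = ⌈(2/ε)·ln(2m)⌉; assume t ≤ m − 1. Then there exists a set K = {k_1, …, k_t} of t distinct integers from {1, …, m−1} that is 'good' for all residues g with g ≢ 0 (mod m); that is, for every integer g with g mod m ≠ 0, (1/t²)·(∑_{i=1}^{t} cos(2π k_i g / m))² < ε. -/
/-!
Probabilistic method: choose `K` uniformly among the `t`-subsets of `{1, …, m - 1}`. For a fixed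
`j`, the sum `∑_{k ∈ K} cos (2πkj/m)` samples `t` values in `[-1, 1]` without replacement from a
population with total `-1`. Maclaurin's inequality `e_t(x) ≤ C(n, t) · (mean x)^t` bounds the
exponential moment of such a sample by that of `t` independent draws, so Chernoff's method gives
each tail `± ∑ ≥ √ε · t` probability at most `e · exp (-εt/2) ≤ e/(2m)` (and `1/(2m)` for the upper
tail, whose population total is negative). The cosine sums only depend on `±g mod m`, so a union
bound over the `⌊m/2⌋` residues `1, …, ⌊m/2⌋` leaves probability at least `1 - (1 + e)/4 > 0` that
`K` is good.
-/

open Real Finset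

theorem sum_powersetCard_succ_insert_prod {ι R : Type*} [DecidableEq ι] [CommSemiring R]
    {s : Finset ι} {a : ι} (ha : a ∉ s) (x : ι → R) (t : ℕ) :
    ∑ K ∈ (insert a s).powersetCard (t + 1), ∏ i ∈ K, x i =
      (∑ K ∈ s.powersetCard (t + 1), ∏ i ∈ K, x i) +
        x a * ∑ K ∈ s.powersetCard t, ∏ i ∈ K, x i := by
  have hnotMem : ∀ K ∈ s.powersetCard t, a ∉ K := fun K hK haK =>
    ha ((mem_powersetCard.1 hK).1 haK)
  rw [powersetCard_succ_insert ha, sum_union, sum_image, Finset.mul_sum]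
  · exact congrArg _ (sum_congr rfl fun K hK => prod_insert (hnotMem K hK))
  · exact fun K hK L hL hKL => by
      simpa [erase_insert (hnotMem K hK), erase_insert (hnotMem L hL)] using
        congrArg (erase · a) hKL
  · exact disjoint_left.2 fun K hK hK' => by
      obtain ⟨L, -, rfl⟩ := mem_image.1 hK'
      exact ha ((mem_powersetCard.1 hK).1 (mem_insert_self a L))

theorem choose_mul_pow_add_le_choose_succ_mul_pow {n t : ℕ} (htn : t ≤ n) {A y : ℝ}
    (hA : 0 ≤ A) (hy : 0 ≤ y) :
    n.choose (t + 1) * A ^ (t + 1) + y * (n.choose t * A ^ t) ≤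
      (n + 1).choose (t + 1) * ((n * A + y) / (n + 1)) ^ (t + 1) := by
  set B := (n * A + y) / (n + 1)
  have hn : (0 : ℝ) < n + 1 := by positivity
  have hB0 : 0 ≤ B := by positivity
  have hB : (n + 1) * B = n * A + y := by simp only [B]; field_simp
  clear_value B
  have hchoose : (n.choose (t + 1) : ℝ) * (n + 1) = (n + 1).choose (t + 1) * (n - t) := by
    have := Nat.choose_mul_succ_eq n (t + 1)
    rw [Nat.add_sub_add_right] at this
    rw [← Nat.cast_sub htn]
    exact_mod_cast this
  have hchoose' : (n + 1 : ℝ) * n.choose t = (n + 1).choose (t + 1) * (t + 1) := by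
    exact_mod_cast Nat.add_one_mul_choose_eq n t
  have bernoulli : A ^ (t + 1) + (t + 1) * A ^ t * (B - A) ≤ B ^ (t + 1) := by
    simpa using pow_add_mul_le_add_pow hA (by linarith : 0 ≤ 2 * A + (B - A)) (t + 1)
  rw [← mul_le_mul_iff_right₀ hn]
  calc (n + 1 : ℝ) * (n.choose (t + 1) * A ^ (t + 1) + y * (n.choose t * A ^ t))
      = (n + 1).choose (t + 1) * ((n + 1) * (A ^ (t + 1) + (t + 1) * A ^ t * (B - A))) := by
        linear_combination A ^ (t + 1) * hchoose + y * A ^ t * hchoose' -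
          ((n + 1).choose (t + 1) * (t + 1) * A ^ t : ℝ) * hB
    _ ≤ (n + 1) * ((n + 1).choose (t + 1) * B ^ (t + 1)) := by
        rw [mul_left_comm]; gcongr

theorem sum_powersetCard_prod_le_choose_mul_mean_pow {ι : Type*} [DecidableEq ι] (s : Finset ι)
    {x : ι → ℝ} (hx : ∀ i ∈ s, 0 ≤ x i) (t : ℕ) :
    ∑ K ∈ s.powersetCard t, ∏ i ∈ K, x i ≤ (#s).choose t * ((∑ i ∈ s, x i) / #s) ^ t := by
  induction s using Finset.induction_on generalizing t with
  | empty =>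
    obtain _ | t := t
    · simp
    · simp [powersetCard_eq_empty.2 (by simp : #(∅ : Finset ι) < t + 1)]
  | insert a s ha ih =>
    obtain _ | t := t
    · simp
    rcases lt_or_ge #s t with hst | hts
    · have hlt : #(insert a s) < t + 1 := by rw [card_insert_of_notMem ha]; omega
      simp [powersetCard_eq_empty.2 hlt, Nat.choose_eq_zero_of_lt hlt]
    have hxs : ∀ i ∈ s, 0 ≤ x i := fun i hi => hx i (mem_insert_of_mem hi)
    have hsum : ∑ i ∈ s, x i = #s * ((∑ i ∈ s, x i) / #s) := by
      rcases s.eq_empty_or_nonempty with rfl | hne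
      · simp
      · field_simp
    rw [sum_powersetCard_succ_insert_prod ha, sum_insert ha, card_insert_of_notMem ha, hsum,
      add_comm (x a), Nat.cast_succ]
    calc _ ≤ (#s).choose (t + 1) * ((∑ i ∈ s, x i) / #s) ^ (t + 1) +
          x a * ((#s).choose t * ((∑ i ∈ s, x i) / #s) ^ t) := by
          gcongr
          exacts [ih hxs _, hx a (mem_insert_self a s), ih hxs _]
      _ ≤ _ := choose_mul_pow_add_le_choose_succ_mul_pow hts
          (div_nonneg (sum_nonneg hxs) (Nat.cast_nonneg _)) (hx a (mem_insert_self a s))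

section Hoeffding

variable {ι : Type*} (s : Finset ι) {c : ι → ℝ} {B : ℝ}

theorem sum_exp_mul_le_card_add_mul_cosh (hc : ∀ i ∈ s, |c i| ≤ 1) (hB : 0 ≤ B)
    (hcB : ∑ i ∈ s, c i ≤ B) {l : ℝ} (hl : 0 ≤ l) :
    ∑ i ∈ s, exp (c i * l) ≤ (#s + B) * cosh l := by
  have hsinh : 0 ≤ sinh l := sinh_nonneg_iff.2 hl
  calc ∑ i ∈ s, exp (c i * l) ≤ ∑ i ∈ s, (cosh l + c i * sinh l) :=
        sum_le_sum fun i hi => exp_mul_le_cosh_add_mul_sinh (hc i hi) l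
    _ = #s * cosh l + (∑ i ∈ s, c i) * sinh l := by
        rw [sum_add_distrib, sum_const, nsmul_eq_mul, sum_mul]
    _ ≤ #s * cosh l + B * cosh l := by
        gcongr
        exact (sinh_lt_cosh l).le
    _ = (#s + B) * cosh l := by ring

theorem mean_exp_mul_pow_le {t : ℕ} (hts : t ≤ #s) (hc : ∀ i ∈ s, |c i| ≤ 1) (hB : 0 ≤ B)
    (hcB : ∑ i ∈ s, c i ≤ B) {l : ℝ} (hl : 0 ≤ l) :
    ((∑ i ∈ s, exp (c i * l)) / #s) ^ t ≤ exp (B + t * l ^ 2 / 2) := by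
  rcases (#s).eq_zero_or_pos with hs | hs
  · obtain rfl : t = 0 := by omega
    simpa using one_le_exp hB
  have hs' : (0 : ℝ) < #s := by exact_mod_cast hs
  have hmean : (∑ i ∈ s, exp (c i * l)) / #s ≤ exp (B / #s + l ^ 2 / 2) :=
    calc (∑ i ∈ s, exp (c i * l)) / #s ≤ (#s + B) * cosh l / #s := by
          gcongr; exact sum_exp_mul_le_card_add_mul_cosh s hc hB hcB hl
      _ = (1 + B / #s) * cosh l := by field_simp
      _ ≤ exp (B / #s) * exp (l ^ 2 / 2) := by
          gcongr
          · exact add_comm (B / #s) 1 ▸ add_one_le_exp _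
          · exact cosh_le_exp_half_sq l
      _ = exp (B / #s + l ^ 2 / 2) := (exp_add _ _).symm
  have htB : t * (B / #s) ≤ B := by
    rw [mul_div_left_comm]
    exact mul_le_of_le_one_right hB ((div_le_one hs').2 (by exact_mod_cast hts))
  calc ((∑ i ∈ s, exp (c i * l)) / #s) ^ t ≤ exp (B / #s + l ^ 2 / 2) ^ t := by
        gcongr
    _ = exp (t * (B / #s) + t * l ^ 2 / 2) := by rw [← exp_nat_mul]; ring_nf
    _ ≤ exp (B + t * l ^ 2 / 2) := by gcongr

theorem card_filter_powersetCard_le_choose_mul_exp [DecidableEq ι] {t : ℕ} (hts : t ≤ #s)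
    (hc : ∀ i ∈ s, |c i| ≤ 1) (hB : 0 ≤ B) (hcB : ∑ i ∈ s, c i ≤ B) {r : ℝ} (hr : 0 ≤ r) :
    (#{K ∈ s.powersetCard t | r ≤ ∑ i ∈ K, c i} : ℝ) ≤
      (#s).choose t * exp (B - r ^ 2 / (2 * t)) := by
  -- `l = r / t` minimises the Chernoff exponent `-r l + t l² / 2`.
  set l := r / t
  have hl : 0 ≤ l := by positivity
  have hexponent : -(r * l) + (B + t * l ^ 2 / 2) = B - r ^ 2 / (2 * t) := by
    rcases eq_or_ne (t : ℝ) 0 with ht | ht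
    · simp [l, ht]
    · simp only [l]; field_simp; ring
  calc (#{K ∈ s.powersetCard t | r ≤ ∑ i ∈ K, c i} : ℝ)
      ≤ ∑ K ∈ s.powersetCard t, exp ((∑ i ∈ K, c i - r) * l) := by
        rw [natCast_card_filter]
        refine sum_le_sum fun K _ => ?_
        split_ifs with hK
        · exact one_le_exp (mul_nonneg (sub_nonneg.2 hK) hl)
        · exact (exp_pos _).le
    _ = exp (-(r * l)) * ∑ K ∈ s.powersetCard t, ∏ i ∈ K, exp (c i * l) := by
        rw [Finset.mul_sum]
        refine sum_congr rfl fun K _ => ?_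
        rw [← exp_sum, ← exp_add, sub_mul, sum_mul]
        congr 1
        ring
    _ ≤ exp (-(r * l)) * ((#s).choose t * exp (B + t * l ^ 2 / 2)) := by
        gcongr
        calc ∑ K ∈ s.powersetCard t, ∏ i ∈ K, exp (c i * l)
            ≤ (#s).choose t * ((∑ i ∈ s, exp (c i * l)) / #s) ^ t :=
              sum_powersetCard_prod_le_choose_mul_mean_pow s (fun i _ => (exp_pos _).le) t
          _ ≤ (#s).choose t * exp (B + t * l ^ 2 / 2) := by
              gcongr
              exact mean_exp_mul_pow_le s hts hc hB hcB hl
    _ = (#s).choose t * exp (B - r ^ 2 / (2 * t)) := by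
        simp only [← hexponent, exp_add]; ring

end Hoeffding

theorem exists_mem_powersetCard_forall_abs_sum_lt {ι κ : Type*} [DecidableEq ι] [DecidableEq κ]
    (s : Finset ι) (t : ℕ) (J : Finset κ) (c : κ → ι → ℝ) (r : ℝ)
    (h : ∑ j ∈ J, ((#{K ∈ s.powersetCard t | r ≤ ∑ i ∈ K, c j i} : ℝ) +
      #{K ∈ s.powersetCard t | r ≤ ∑ i ∈ K, -c j i}) < (#s).choose t) :
    ∃ K ∈ s.powersetCard t, ∀ j ∈ J, |∑ i ∈ K, c j i| < r := by
  by_contra! hbad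
  have hcover : s.powersetCard t ⊆ J.biUnion fun j =>
      {K ∈ s.powersetCard t | r ≤ ∑ i ∈ K, c j i} ∪
        {K ∈ s.powersetCard t | r ≤ ∑ i ∈ K, -c j i} := by
    intro K hK
    obtain ⟨j, hj, hrK⟩ := hbad K hK
    simp only [mem_biUnion, mem_union, mem_filter, sum_neg_distrib]
    exact ⟨j, hj, (le_abs'.1 hrK).symm.imp (⟨hK, ·⟩) (⟨hK, le_neg_of_le_neg ·⟩)⟩
  have hcard := (card_le_card hcover).trans <|
    card_biUnion_le.trans (sum_le_sum fun j _ => card_union_le _ _)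
  rw [card_powersetCard] at hcard
  exact h.not_ge (by exact_mod_cast hcard)

theorem sum_Icc_cos_two_pi_mul_div_eq_neg_one {m j : ℕ} (hm : 0 < m) (hj : ¬ m ∣ j) :
    ∑ k ∈ Icc 1 (m - 1), cos (2 * π * k * j / m) = -1 := by
  set z := Complex.exp (2 * π * Complex.I * j / m)
  have hz : z ≠ 1 := (Complex.exp_two_pi_mul_I_mul_div_eq_one_iff hm.ne').not.2 hj
  have hzm : z ^ m = 1 := by
    have : (m : ℂ) ≠ 0 := by exact_mod_cast hm.ne'
    rw [← Complex.exp_nat_mul, show (m : ℂ) * (2 * π * Complex.I * j / m) = j * (2 * π * Complex.I)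
      by field_simp]
    exact Complex.exp_nat_mul_two_pi_mul_I j
  have hre : ∀ k : ℕ, (z ^ k).re = cos (2 * π * k * j / m) := fun k => by
    rw [← Complex.exp_nat_mul, ← Complex.exp_ofReal_mul_I_re]
    push_cast
    ring_nf
  have hrange : ∑ k ∈ range m, cos (2 * π * k * j / m) = 0 := by
    simpa [hre] using congrArg Complex.re (show ∑ k ∈ range m, z ^ k = 0 by
      rw [geom_sum_eq hz, hzm, sub_self, zero_div])
  have hIcc : Icc 1 (m - 1) = (range m).erase 0 := by
    ext k; simp only [mem_Icc, mem_erase, mem_range]; omega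
  rw [← add_sum_erase _ _ (mem_range.2 hm)] at hrange
  rw [hIcc]
  simp only [CharP.cast_eq_zero, mul_zero, zero_mul, zero_div, cos_zero] at hrange
  linarith

theorem cos_two_pi_mul_div_eq_of_dvd {m : ℕ} {g j : ℤ} (h : (m : ℤ) ∣ g - j ∨ (m : ℤ) ∣ g + j)
    (k : ℕ) : cos (2 * π * k * g / m) = cos (2 * π * k * j / m) := by
  rcases eq_or_ne m 0 with rfl | hm
  · simp
  rcases h with ⟨q, hq⟩ | ⟨q, hq⟩
  · have hg : (g : ℝ) = j + m * q := by exact_mod_cast (eq_add_of_sub_eq' hq)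
    rw [hg, show 2 * π * k * (j + m * q) / m = 2 * π * k * j / m + (k * q : ℤ) * (2 * π) by
      push_cast; field_simp, cos_add_int_mul_two_pi]
  · have hg : (g : ℝ) = -j + m * q := by exact_mod_cast (by linear_combination hq : g = -j + m * q)
    rw [hg, show 2 * π * k * (-j + m * q) / m = -(2 * π * k * j / m) + (k * q : ℤ) * (2 * π) by
      push_cast; field_simp, cos_add_int_mul_two_pi, cos_neg]

theorem exists_mem_Icc_cos_two_pi_mul_div_eq {m : ℕ} (hm : 0 < m) {g : ℤ} (hg : ¬ (m : ℤ) ∣ g) :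
    ∃ j ∈ Icc 1 (m / 2), ∀ k : ℕ, cos (2 * π * k * g / m) = cos (2 * π * k * j / m) := by
  have hm' : (m : ℤ) ≠ 0 := by exact_mod_cast hm.ne'
  obtain ⟨r, hr⟩ : ∃ r : ℕ, g % m = r := Int.eq_ofNat_of_zero_le (Int.emod_nonneg g hm')
  have hrm : (r : ℤ) < m := hr ▸ Int.emod_lt_of_pos g (by exact_mod_cast hm)
  have hr0 : r ≠ 0 := fun h => hg (Int.dvd_of_emod_eq_zero (by rw [hr, h]; rfl))
  have hdvd : (m : ℤ) ∣ g - r := hr ▸ (Int.mod_modEq g m).dvd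
  rcases le_or_gt r (m / 2) with hrle | hrgt
  · refine ⟨r, mem_Icc.2 ⟨by omega, hrle⟩, fun k => ?_⟩
    exact_mod_cast cos_two_pi_mul_div_eq_of_dvd (.inl hdvd) k
  · refine ⟨m - r, mem_Icc.2 ⟨by omega, by omega⟩, fun k => ?_⟩
    have : (m : ℤ) ∣ g + (m - r : ℕ) := by
      rw [Nat.cast_sub (by omega : r ≤ m), show g + (m - r) = m + (g - r) by ring]
      exact dvd_add dvd_rfl hdvd
    exact_mod_cast cos_two_pi_mul_div_eq_of_dvd (.inr this) k

theorem exists_mem_powersetCard_forall_abs_sum_cos_lt {m t : ℕ} (hm : 0 < m) (htm : t ≤ m - 1)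
    {r : ℝ} (hr : 0 ≤ r) (hmr : log (2 * m) ≤ r ^ 2 / (2 * t)) :
    ∃ K ∈ (Icc 1 (m - 1)).powersetCard t,
      ∀ j ∈ Icc 1 (m / 2), |∑ k ∈ K, cos (2 * π * k * j / m)| < r := by
  set s : Finset ℕ := Icc 1 (m - 1)
  have hts : t ≤ #s := by simpa [s] using htm
  have hc (j : ℕ) : ∀ k ∈ s, |cos (2 * π * k * j / m)| ≤ 1 := fun k _ => abs_cos_le_one _
  have hsum : ∀ j ∈ Icc 1 (m / 2), ∑ k ∈ s, cos (2 * π * k * j / m) = -1 := fun j hj => by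
    rw [mem_Icc] at hj
    exact sum_Icc_cos_two_pi_mul_div_eq_neg_one hm (Nat.not_dvd_of_pos_of_lt (by omega) (by omega))
  have htail : exp (-(r ^ 2 / (2 * t))) ≤ 1 / (2 * m) := by
    rw [one_div, ← exp_log (by positivity : (0 : ℝ) < 2 * m), ← exp_neg]
    gcongr
  apply exists_mem_powersetCard_forall_abs_sum_lt
  calc ∑ j ∈ Icc 1 (m / 2),
        ((#{K ∈ s.powersetCard t | r ≤ ∑ k ∈ K, cos (2 * π * (k : ℕ) * j / m)} : ℝ) +
          #{K ∈ s.powersetCard t | r ≤ ∑ k ∈ K, -cos (2 * π * (k : ℕ) * j / m)})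
      ≤ ∑ j ∈ Icc 1 (m / 2), ((#s).choose t * exp (0 - r ^ 2 / (2 * t)) +
          (#s).choose t * exp (1 - r ^ 2 / (2 * t))) := by
        refine sum_le_sum fun j hj => add_le_add ?_ ?_
        · exact card_filter_powersetCard_le_choose_mul_exp s hts (hc j) le_rfl
            (by rw [hsum j hj]; norm_num) hr
        · exact card_filter_powersetCard_le_choose_mul_exp s hts (by simpa using hc j)
            zero_le_one (by rw [sum_neg_distrib, hsum j hj]; norm_num) hr
    _ = (m / 2 : ℕ) * (1 + exp 1) * exp (-(r ^ 2 / (2 * t))) * (#s).choose t := by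
        rw [sum_const, Nat.card_Icc, nsmul_eq_mul, zero_sub, sub_eq_add_neg, exp_add]
        simp only [add_tsub_cancel_right]
        ring
    _ < (#s).choose t := by
        have hC : (0 : ℝ) < (#s).choose t := by exact_mod_cast Nat.choose_pos hts
        refine mul_lt_of_lt_one_left hC ?_
        calc ((m / 2 : ℕ) : ℝ) * (1 + exp 1) * exp (-(r ^ 2 / (2 * t)))
            ≤ m / 2 * (1 + exp 1) * (1 / (2 * m)) := by gcongr; exact Nat.cast_div_le
          _ = (1 + exp 1) / 4 := by field_simp; ring
          _ < 1 := by linarith [exp_one_lt_d9]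

theorem good_set_exists_general (m : ℕ) (hm : 2 ≤ m) (ε : ℝ) (hε0 : 0 < ε)
    (t : ℕ) (ht : t = ⌈(2 / ε) * Real.log (2 * m)⌉₊) (htm : t ≤ m - 1) :
    ∃ K : Finset ℕ, K ⊆ Finset.Icc 1 (m - 1) ∧ K.card = t ∧
      ∀ g : ℤ, ¬ ((m : ℤ) ∣ g) →
        (1 / (t : ℝ) ^ 2) *
          (∑ k ∈ K, Real.cos (2 * Real.pi * (k : ℝ) * (g : ℝ) / (m : ℝ))) ^ 2 < ε := by
  have hm0 : 0 < m := by omega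
  have hεt : log (2 * m) ≤ ε * t / 2 := by
    have := ht ▸ Nat.le_ceil ((2 / ε) * log (2 * m))
    rw [div_mul_eq_mul_div, div_le_iff₀ hε0] at this
    linarith
  have ht0 : (0 : ℝ) < t := by nlinarith [log_pos (by norm_cast; omega : (1 : ℝ) < 2 * m)]
  set r := √ε * t
  have hr : r ^ 2 = ε * t ^ 2 := by rw [mul_pow, sq_sqrt hε0.le]
  obtain ⟨K, hK, hgood⟩ := exists_mem_powersetCard_forall_abs_sum_cos_lt hm0 htm
    (r := r) (by positivity) (by rwa [hr, show ε * t ^ 2 / (2 * t) = ε * t / 2 by field_simp])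
  rw [mem_powersetCard] at hK
  refine ⟨K, hK.1, hK.2, fun g hg => ?_⟩
  obtain ⟨j, hj, hcos⟩ := exists_mem_Icc_cos_two_pi_mul_div_eq hm0 hg
  simp_rw [hcos]
  calc 1 / (t : ℝ) ^ 2 * (∑ k ∈ K, cos (2 * π * k * j / m)) ^ 2 < 1 / t ^ 2 * r ^ 2 :=
        mul_lt_mul_of_pos_left (sq_lt_sq' (abs_lt.1 (hgood j hj)).1 (abs_lt.1 (hgood j hj)).2)
          (by positivity)
    _ = ε := by rw [hr]; field_simp

/-- The "good set" lemma for quantum fingerprinting: for an integer `m ≥ 2` and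
`0 < ε < 1`, with `t = ⌈(2/ε)·ln(2m)⌉` and `t ≤ m − 1`, there is a set `K` of `t` distinct
integers from `{1, …, m−1}` such that for every integer `g` not divisible by `m`,
`(1/t²)·(∑_{k ∈ K} cos(2πkg/m))² < ε`. -/
theorem good_set_exists (m : ℕ) (hm : 2 ≤ m) (ε : ℝ) (hε0 : 0 < ε) (hε1 : ε < 1)
    (t : ℕ) (ht : t = ⌈(2 / ε) * Real.log (2 * m)⌉₊) (htm : t ≤ m - 1) :
    ∃ K : Finset ℕ, K ⊆ Finset.Icc 1 (m - 1) ∧ K.card = t ∧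
      ∀ g : ℤ, ¬ ((m : ℤ) ∣ g) →
        (1 / (t : ℝ) ^ 2) *
          (∑ k ∈ K, Real.cos (2 * Real.pi * (k : ℝ) * (g : ℝ) / (m : ℝ))) ^ 2 < ε :=
  good_set_exists_general m hm ε hε0 t ht htm
end
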